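/- Let x be a d-dimensional Gaussian random vector of variance σ² centered at the origin, with d ≥ 2 and ε ≤ 1/e². Then P[‖x‖ ≥ σ√(d(1 + 2 ln(1/ε)))] ≤ ε. -/

import Mathlib

open MeasureTheory Real

/-- The Gaussian measure on R^d centered at the origin with covariance σ²I. -/
noncomputable def gaussMeasure0 (d : ℕ) (σ : ℝ) : Measure (EuclideanSpace ℝ (Fin d)) :=
  volume.withDensity fun x =>
    ENNReal.ofReal ((σ * Real.sqrt (2 * π))⁻¹ ^ d * Real.exp (-‖x‖ ^ 2 / (2 * σ ^ 2)))

lemma integrable_gauss_aux (b : ℝ) (hb : 0 < b) (d : ℕ) :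
    Integrable (fun v : EuclideanSpace ℝ (Fin d) ↦ Real.exp (-b * ‖v‖^2)) := by
  have h := (GaussianFourier.integrable_cexp_neg_mul_sq_norm_add
    (V := EuclideanSpace ℝ (Fin d)) (b := (b:ℂ)) (by simpa) 0 0).re
  refine h.congr (Filter.Eventually.of_forall fun v => ?_)
  have : (-(b:ℂ) * (‖v‖:ℂ)^2 + 0 * ((inner ℝ (0 : EuclideanSpace ℝ (Fin d)) v : ℝ) : ℂ))
      = ((-b*‖v‖^2 : ℝ) : ℂ) := by push_cast; ring
  simp only [this, Complex.exp_ofReal_re, RCLike.re_to_complex]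

lemma integral_gauss_aux (b : ℝ) (hb : 0 < b) (d : ℕ) :
    ∫ v : EuclideanSpace ℝ (Fin d), Real.exp (-b * ‖v‖^2) = (π/b) ^ ((d:ℝ)/2) := by
  rw [GaussianFourier.integral_rexp_neg_mul_sq_norm hb]
  simp

set_option maxHeartbeats 1000000 in
/-- Corollary: for a centered d-dimensional Gaussian of variance σ², d ≥ 2 and
ε ≤ 1/e², the norm exceeds σ√(d(1+2 ln(1/ε))) with probability at most ε. -/
theorem gaussian_norm_tail (d : ℕ) (hd : 2 ≤ d) (σ ε : ℝ) (hσ : 0 < σ)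
    (hε0 : 0 < ε) (hε : ε ≤ (Real.exp 2)⁻¹) :
    gaussMeasure0 d σ
        {x | σ * Real.sqrt (d * (1 + 2 * Real.log (1 / ε))) ≤ ‖x‖} ≤
      ENNReal.ofReal ε := by
  set L : ℝ := Real.log (1 / ε) with hLdef
  have hL : 2 ≤ L := by
    have h1 : Real.exp 2 ≤ 1 / ε := by
      rw [le_div_iff₀ hε0]
      calc Real.exp 2 * ε ≤ Real.exp 2 * (Real.exp 2)⁻¹ := by
            gcongr
          _ = 1 := mul_inv_cancel₀ (Real.exp_pos 2).ne'
    calc (2:ℝ) = Real.log (Real.exp 2) := (Real.log_exp 2).symm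
      _ ≤ L := Real.log_le_log (Real.exp_pos 2) h1
  have hexpL : Real.exp L = 1 / ε := Real.exp_log (by positivity)
  have h1L : (0:ℝ) < 1 + 2 * L := by linarith
  have h2σ : (0:ℝ) < 2 * σ ^ 2 := by positivity
  set b : ℝ := (2 * σ^2 * (1 + 2*L))⁻¹ with hbdef
  set lam : ℝ := (2*σ^2)⁻¹ - b with hlamdef
  have hb : 0 < b := by positivity
  have hlam : 0 < lam := by
    rw [hlamdef, sub_pos, hbdef]
    apply inv_strictAnti₀ h2σ
    nlinarith
  have hsum : lam + b = (2*σ^2)⁻¹ := by rw [hlamdef]; ring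
  set r : ℝ := σ * Real.sqrt (d * (1 + 2*L)) with hrdef
  have hr0 : 0 ≤ r := by positivity
  have hr2 : r^2 = σ^2 * (d * (1 + 2*L)) := by
    rw [hrdef, mul_pow, Real.sq_sqrt (by positivity)]
  have hlr : lam * r^2 = d * L := by
    rw [hr2, hlamdef, hbdef]
    field_simp
    ring
  set C : ℝ := (σ * Real.sqrt (2 * π))⁻¹ with hCdef
  have hC : 0 < C := by
    rw [hCdef]
    have : 0 < Real.sqrt (2*π) := Real.sqrt_pos.2 (by positivity)
    positivity
  set K : ℝ := Real.exp (-(d * L)) * C ^ d with hKdef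
  have hA : MeasurableSet {x : EuclideanSpace ℝ (Fin d) | r ≤ ‖x‖} :=
    measurableSet_le measurable_const measurable_norm
  -- pointwise bound on the set
  have hpt : ∀ x : EuclideanSpace ℝ (Fin d), x ∈ {x : EuclideanSpace ℝ (Fin d) | r ≤ ‖x‖} →
      C ^ d * Real.exp (-‖x‖ ^ 2 / (2 * σ ^ 2)) ≤ K * Real.exp (-b * ‖x‖^2) := by
    intro x hx
    have hxr : r ≤ ‖x‖ := hx
    have hx2 : r^2 ≤ ‖x‖^2 := by nlinarith [norm_nonneg x]
    rw [hKdef, mul_comm (Real.exp (-(d*L))) (C^d), mul_assoc, ← Real.exp_add]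
    have hCd : (0:ℝ) < C ^ d := by positivity
    apply mul_le_mul_of_nonneg_left _ hCd.le
    rw [Real.exp_le_exp]
    have hkey : lam * r^2 ≤ lam * ‖x‖^2 := by nlinarith
    have hdiv : -‖x‖ ^ 2 / (2 * σ ^ 2) = -((lam + b) * ‖x‖^2) := by
      rw [hsum]; field_simp
    rw [hdiv, ← hlr]
    nlinarith
  -- integrability of the dominating function
  have hint : Integrable (fun x : EuclideanSpace ℝ (Fin d) => K * Real.exp (-b * ‖x‖^2)) :=
    (integrable_gauss_aux b hb d).const_mul K
  have hKnn : 0 ≤ K := by positivity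
  -- the main chain
  have step1 : gaussMeasure0 d σ {x : EuclideanSpace ℝ (Fin d) | r ≤ ‖x‖}
      = ∫⁻ x in {x : EuclideanSpace ℝ (Fin d) | r ≤ ‖x‖},
          ENNReal.ofReal (C ^ d * Real.exp (-‖x‖ ^ 2 / (2 * σ ^ 2))) := by
    rw [gaussMeasure0, withDensity_apply _ hA]
  have step2 : (∫⁻ x in {x : EuclideanSpace ℝ (Fin d) | r ≤ ‖x‖},
          ENNReal.ofReal (C ^ d * Real.exp (-‖x‖ ^ 2 / (2 * σ ^ 2))))
      ≤ ∫⁻ x : EuclideanSpace ℝ (Fin d), ENNReal.ofReal (K * Real.exp (-b * ‖x‖^2)) := by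
    refine le_trans (setLIntegral_mono ?_ ?_) (setLIntegral_le_lintegral _ _)
    · exact Measurable.ennreal_ofReal (by fun_prop)
    · intro x hx
      exact ENNReal.ofReal_le_ofReal (hpt x hx)
  have step3 : (∫⁻ x : EuclideanSpace ℝ (Fin d), ENNReal.ofReal (K * Real.exp (-b * ‖x‖^2)))
      = ENNReal.ofReal (K * (π/b) ^ ((d:ℝ)/2)) := by
    rw [← ofReal_integral_eq_lintegral_ofReal hint
      (Filter.Eventually.of_forall fun x => by positivity)]
    rw [integral_const_mul, integral_gauss_aux b hb d]
  -- arithmetic: K * (π/b)^(d/2) ≤ ε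
  have harith : K * (π/b) ^ ((d:ℝ)/2) ≤ ε := by
    have hπb : π / b = (2*π*σ^2) * (1 + 2*L) := by
      rw [hbdef]; field_simp
    have hCpow : C ^ d = ((2*π*σ^2) ^ ((d:ℝ)/2))⁻¹ := by
      have hσs : σ * Real.sqrt (2*π) = (2*π*σ^2) ^ ((1:ℝ)/2) := by
        rw [← Real.sqrt_eq_rpow,
          show 2*π*σ^2 = (σ * Real.sqrt (2*π))^2 by
            rw [mul_pow, Real.sq_sqrt (by positivity : (0:ℝ) ≤ 2*π)]; ring,
          Real.sqrt_sq (by positivity)]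
      rw [hCdef, hσs, inv_pow, ← Real.rpow_natCast ((2*π*σ^2) ^ ((1:ℝ)/2)) d,
        ← Real.rpow_mul (by positivity), show (1:ℝ)/2*(d:ℝ) = (d:ℝ)/2 by ring]
    have hfact : K * (π/b) ^ ((d:ℝ)/2)
        = Real.exp (-(d*L)) * (1 + 2*L) ^ ((d:ℝ)/2) := by
      have hA0 : (0:ℝ) < (2*π*σ^2) ^ ((d:ℝ)/2) := Real.rpow_pos_of_pos (by positivity) _
      rw [hKdef, hπb, Real.mul_rpow (by positivity) h1L.le, hCpow, mul_assoc,
        inv_mul_cancel_left₀ hA0.ne']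
    rw [hfact]
    have hexp2 : (7:ℝ) ≤ Real.exp 2 := by
      have h1 := Real.exp_one_gt_d9
      have : Real.exp 2 = Real.exp 1 * Real.exp 1 := by
        rw [← Real.exp_add]; norm_num
      nlinarith
    have h12L : 1 + 2*L ≤ Real.exp L := by
      have h3 : L - 1 ≤ Real.exp (L - 2) := by
        have := Real.add_one_le_exp (L - 2)
        linarith
      have h4 : Real.exp 2 * (L - 1) ≤ Real.exp 2 * Real.exp (L - 2) := by
        gcongr
      rw [← Real.exp_add] at h4
      have h5 : (2:ℝ) + (L - 2) = L := by ring
      rw [h5] at h4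
      nlinarith
    calc Real.exp (-(d*L)) * (1 + 2*L) ^ ((d:ℝ)/2)
        ≤ Real.exp (-(d*L)) * (Real.exp L) ^ ((d:ℝ)/2) := by
          gcongr
      _ = Real.exp (-(d*L) + L * ((d:ℝ)/2)) := by
          rw [← Real.exp_mul, ← Real.exp_add]
      _ ≤ Real.exp (-L) := by
          rw [Real.exp_le_exp]
          have hd2 : (2:ℝ) ≤ (d:ℝ) := by exact_mod_cast hd
          nlinarith
      _ = ε := by
          rw [Real.exp_neg, hexpL]
          field_simp
  calc gaussMeasure0 d σ {x : EuclideanSpace ℝ (Fin d) | r ≤ ‖x‖}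
      ≤ ENNReal.ofReal (K * (π/b) ^ ((d:ℝ)/2)) := by rw [step1, ← step3]; exact step2
    _ ≤ ENNReal.ofReal ε := ENNReal.ofReal_le_ofReal harith
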